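/- arXiv:2205.03750 — 2 statements merged into one kernel-verified Lean document; each statement's English description precedes it below -/
import Mathlib

section
/- A single phase-1 step of the CLT model for a fixed cascade s is exactly computed by one layer of a threshold neural network: with input vector h ∈ {0,1}^N indicating s-active nodes, weight matrix W with W_{i,j} = w_{j,i}^s for (v_j,v_i) ∈ E, W_{i,i} = 1, and zero otherwise, and activation σ_i(x) = 1 if x ≥ θ_i^s else 0 (with θ_i^s ∈ (0,1] and Σ_j w_{j,i}^s ≤ 1), the output σ(W h) ∈ {0,1}^N equals the indicator of nodes that are s-active or newly candidate-activated by cascade s. -/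
open Finset

/-- A single phase-1 step of the CLT model for a fixed cascade `s` is exactly computed
by one layer of a threshold neural network. With input `h ∈ {0,1}^N` the indicator of
the set `A` of `s`-active nodes, weight matrix `W i j = w j i` off the diagonal and
`W i i = 1`, and threshold activations `σ_i(x) = 1` iff `θ i ≤ x`, the output
`σ (W h)` is the indicator of nodes that are already `s`-active or newly
candidate-activated by cascade `s`. -/
theorem phase1_threshold_layer (N : ℕ) (w : Fin N → Fin N → ℝ) (θ : Fin N → ℝ)
    (hw : ∀ j i, 0 ≤ w j i) (hsum : ∀ i, ∑ j, w j i ≤ 1)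
    (hθpos : ∀ i, 0 < θ i) (hθle : ∀ i, θ i ≤ 1)
    (A : Finset (Fin N)) (h : Fin N → ℝ)
    (hh : ∀ j, h j = if j ∈ A then 1 else 0)
    (W : Fin N → Fin N → ℝ)
    (hW : ∀ i j, W i j = if i = j then 1 else w j i)
    (out : Fin N → ℝ)
    (hout : ∀ i, out i = if θ i ≤ ∑ j, W i j * h j then 1 else 0) :
    ∀ i, out i = 1 ↔ (i ∈ A ∨ θ i ≤ ∑ j ∈ A, w j i) := by
  intro i
  have hWnn : ∀ j, 0 ≤ W i j := by
    intro j
    rw [hW]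
    split
    · norm_num
    · exact hw j i
  have hS : ∑ j, W i j * h j = ∑ j ∈ A, W i j := by
    rw [Finset.sum_congr rfl (fun j _ => by rw [hh j, mul_ite, mul_one, mul_zero])]
    rw [Finset.sum_ite_mem, Finset.univ_inter]
  rw [hout, hS]
  by_cases hi : i ∈ A
  · have hle : θ i ≤ ∑ j ∈ A, W i j := by
      have h1 : W i i ≤ ∑ j ∈ A, W i j :=
        Finset.single_le_sum (fun j _ => hWnn j) hi
      rw [hW, if_pos rfl] at h1
      exact le_trans (hθle i) h1
    rw [if_pos hle]
    simp [hi]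
  · have heq : ∑ j ∈ A, W i j = ∑ j ∈ A, w j i := by
      refine Finset.sum_congr rfl fun j hj => ?_
      rw [hW, if_neg]
      intro he; exact hi (he ▸ hj)
    rw [heq]
    constructor
    · intro h1
      split at h1
      · right; assumption
      · norm_num at h1
    · rintro (h1 | h1)
      · exact absurd h1 hi
      · rw [if_pos h1]
end

section
/- There exists a directed graph with weights and thresholds and two competitive cascades under the CLT model such that enlarging the seed set of cascade 2 strictly decreases the final number of 1-active nodes, i.e., the final 1-active set is not monotone with respect to the competitor's seed set (adding seeds to cascade 2 can remove nodes from cascade 1's final set). -/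
open Finset

/-- A competitive linear threshold (CLT) model on a directed graph with `N` nodes
and `S` cascades: edge weights `w j i s` (weight of edge `(v_j, v_i)` for cascade `s`,
zero for non-edges), normalized so that the in-weights of each node sum to at most one,
and thresholds `θ i s ∈ [0,1]`. -/
structure CLTModel (N S : ℕ) where
  w : Fin N → Fin N → Fin S → ℝ
  θ : Fin N → Fin S → ℝ
  w_nonneg : ∀ j i s, 0 ≤ w j i s
  w_sum_le_one : ∀ i s, ∑ j, w j i s ≤ 1
  θ_nonneg : ∀ i s, 0 ≤ θ i s
  θ_le_one : ∀ i s, θ i s ≤ 1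

/-- A status assigns to each node either `none` (inactive) or `some s` (`s`-active). -/
abbrev CLTStatus (N S : ℕ) := Fin N → Option (Fin S)

/-- Influence summation `ζ_i^s`: total weight from `s`-active in-neighbors of `v_i`. -/
noncomputable def CLTModel.influ {N S : ℕ} (M : CLTModel N S)
    (st : CLTStatus N S) (i : Fin N) (s : Fin S) : ℝ :=
  ∑ j, if st j = some s then M.w j i s else 0

/-- One diffusion step of the CLT model (phase 1 followed by phase 2): an active node
stays active with its cascade; an inactive node `v_i` is candidate-activated by each
cascade `s` with `θ i s ≤ ζ_i^s` (phase 1), and, if there is any candidate, is finally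
activated by the candidate cascade of largest influence summation, ties broken toward
the smallest cascade index (phase 2). -/
noncomputable def CLTModel.step {N S : ℕ} (M : CLTModel N S)
    (st : CLTStatus N S) : CLTStatus N S := fun i =>
  match st i with
  | some s => some s
  | none =>
    letI C : Finset (Fin S) := Finset.univ.filter fun s => M.θ i s ≤ M.influ st i s
    if h : C.Nonempty then
      some ((C.filter fun s => M.influ st i s = C.sup' h (M.influ st i)).min'
        (by
          obtain ⟨s, hs, hval⟩ := C.exists_mem_eq_sup' h (M.influ st i)
          exact ⟨s, Finset.mem_filter.mpr ⟨hs, hval.symm⟩⟩))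
    else none

/-- Initial status given seed sets `A₁` for cascade 1 and `A₂` for cascade 2. -/
def seeds2 {N : ℕ} (A₁ A₂ : Finset (Fin N)) : CLTStatus N 2 := fun i =>
  if i ∈ A₁ then some 0 else if i ∈ A₂ then some 1 else none

lemma step_stay {N S : ℕ} (M : CLTModel N S) (st : CLTStatus N S) (i : Fin N) (s : Fin S)
    (h : st i = some s) : M.step st i = some s := by
  unfold CLTModel.step; rw [h]

lemma step_none {N S : ℕ} (M : CLTModel N S) (st : CLTStatus N S) (i : Fin N)
    (h0 : st i = none) (h1 : ∀ s, ¬ M.θ i s ≤ M.influ st i s) : M.step st i = none := by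
  unfold CLTModel.step; rw [h0]
  have : (Finset.univ.filter fun s => M.θ i s ≤ M.influ st i s) = ∅ := by
    simp [Finset.filter_eq_empty_iff, h1]
  simp [this]

lemma step_some {N S : ℕ} (M : CLTModel N S) (st : CLTStatus N S) (i : Fin N) (r : Fin S)
    (h0 : st i = none) (h1 : M.θ i r ≤ M.influ st i r)
    (h2 : ∀ s, M.θ i s ≤ M.influ st i s → M.influ st i s ≤ M.influ st i r)
    (h3 : ∀ s, M.θ i s ≤ M.influ st i s → M.influ st i s = M.influ st i r → r ≤ s) :
    M.step st i = some r := by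
  unfold CLTModel.step; rw [h0]
  have hr : r ∈ Finset.univ.filter fun s => M.θ i s ≤ M.influ st i s := by simp [h1]
  have hne : (Finset.univ.filter fun s => M.θ i s ≤ M.influ st i s).Nonempty := ⟨r, hr⟩
  rw [dif_pos hne]
  have hsup : (Finset.univ.filter fun s => M.θ i s ≤ M.influ st i s).sup' hne (M.influ st i)
      = M.influ st i r := by
    apply le_antisymm
    · exact Finset.sup'_le _ _ fun s hs => h2 s (by simpa using hs)
    · exact Finset.le_sup' _ hr
  refine congrArg some (le_antisymm ?_ ?_)
  · exact Finset.min'_le _ _ (by simp [Finset.mem_filter, h1, hsup])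
  · apply Finset.le_min'
    intro s hs
    rw [Finset.mem_filter, Finset.mem_filter, hsup] at hs
    exact h3 s hs.1.2 hs.2

/-- Non-monotonicity with respect to the competitor's seed set under the CLT model:
there is a graph with weights, thresholds and two competitive cascades such that
enlarging the seed set of cascade 2 (with cascade 1's seeds fixed and disjoint from
them) makes the final 1-active set strictly smaller. -/
theorem clt_not_monotone_in_competitor_seeds :
    ∃ (N : ℕ) (M : CLTModel N 2) (A₁ A₂ A₂' : Finset (Fin N)),
      Disjoint A₁ A₂' ∧ A₂ ⊆ A₂' ∧
      {i : Fin N | (M.step)^[N] (seeds2 A₁ A₂') i = some 0} ⊂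
        {i : Fin N | (M.step)^[N] (seeds2 A₁ A₂) i = some 0} := by
  classical
  set M : CLTModel 3 2 :=
    { w := fun j i s => if j = 0 ∧ i = 2 ∧ s = 0 then 1/2
                        else if j = 1 ∧ i = 2 ∧ s = 1 then 1 else 0
      θ := fun i s => if i = 2 ∧ s = 0 then 1/2 else 1
      w_nonneg := by intro j i s; split_ifs <;> norm_num
      w_sum_le_one := by
        intro i s; fin_cases i <;> fin_cases s <;>
          simp [Fin.sum_univ_three] <;> norm_num
      θ_nonneg := by intro i s; split_ifs <;> norm_num
      θ_le_one := by intro i s; split_ifs <;> norm_num } with hM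
  refine ⟨3, M, {0}, ∅, {1}, by decide, by simp, ?_⟩
  have hw : ∀ j i s, M.w j i s = if j = 0 ∧ i = 2 ∧ s = 0 then 1/2
      else if j = 1 ∧ i = 2 ∧ s = 1 then (1:ℝ) else 0 := fun _ _ _ => rfl
  have hθ : ∀ i s, M.θ i s = if i = 2 ∧ s = 0 then 1/2 else (1:ℝ) := fun _ _ => rfl
  -- case A₂ = ∅
  have e0 : seeds2 ({0} : Finset (Fin 3)) ∅ = ![some 0, none, none] := by
    funext i; fin_cases i <;> rfl
  have hstep1 : M.step ![some 0, none, none] = ![some 0, none, some 0] := by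
    funext i
    fin_cases i
    · exact step_stay M ![some 0, none, none] 0 0 rfl
    · refine step_none M ![some 0, none, none] 1 rfl ?_
      intro s
      fin_cases s <;>
        simp [CLTModel.influ, hw, hθ, Fin.sum_univ_three] <;> norm_num
    · refine step_some M ![some 0, none, none] 2 0 rfl ?_ ?_ ?_
      · simp [CLTModel.influ, hw, hθ, Fin.sum_univ_three]
      · intro s hs
        fin_cases s
        · exact le_refl _
        · exfalso; revert hs
          simp [CLTModel.influ, hw, hθ, Fin.sum_univ_three]
      · intro s _ _
        exact Fin.zero_le s
  have hfixf : M.step ![some 0, none, some 0] = ![some 0, none, some 0] := by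
    funext i
    fin_cases i
    · exact step_stay M ![some 0, none, some 0] 0 0 rfl
    · refine step_none M ![some 0, none, some 0] 1 rfl ?_
      intro s
      fin_cases s <;>
        simp [CLTModel.influ, hw, hθ, Fin.sum_univ_three] <;> norm_num
    · exact step_stay M ![some 0, none, some 0] 2 0 rfl
  have hiterf : (M.step)^[3] (seeds2 ({0} : Finset (Fin 3)) ∅) = ![some 0, none, some 0] := by
    rw [e0]
    show M.step (M.step (M.step ![some 0, none, none])) = ![some 0, none, some 0]
    rw [hstep1, hfixf, hfixf]
  -- case A₂' = {1}
  have e1 : seeds2 ({0} : Finset (Fin 3)) {1} = ![some 0, some 1, none] := by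
    funext i; fin_cases i <;> rfl
  have hstep1' : M.step ![some 0, some 1, none] = ![some 0, some 1, some 1] := by
    funext i
    fin_cases i
    · exact step_stay M ![some 0, some 1, none] 0 0 rfl
    · exact step_stay M ![some 0, some 1, none] 1 1 rfl
    · refine step_some M ![some 0, some 1, none] 2 1 rfl ?_ ?_ ?_
      · simp [CLTModel.influ, hw, hθ, Fin.sum_univ_three]
      · intro s hs
        fin_cases s
        · simp [CLTModel.influ, hw, hθ, Fin.sum_univ_three]
          norm_num
        · exact le_refl _
      · intro s hs heq
        fin_cases s
        · exfalso
          revert heq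
          simp [CLTModel.influ, hw, hθ, Fin.sum_univ_three]
        · exact le_refl _
  have hfixg : M.step ![some 0, some 1, some 1] = ![some 0, some 1, some 1] := by
    funext i
    fin_cases i
    · exact step_stay M ![some 0, some 1, some 1] 0 0 rfl
    · exact step_stay M ![some 0, some 1, some 1] 1 1 rfl
    · exact step_stay M ![some 0, some 1, some 1] 2 1 rfl
  have hiterg : (M.step)^[3] (seeds2 ({0} : Finset (Fin 3)) {1}) = ![some 0, some 1, some 1] := by
    rw [e1]
    show M.step (M.step (M.step ![some 0, some 1, none])) = ![some 0, some 1, some 1]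
    rw [hstep1', hfixg, hfixg]
  rw [hiterf, hiterg]
  constructor
  · intro i hi
    fin_cases i <;> simp_all
  · intro h
    have h2 : (2 : Fin 3) ∈ {i : Fin 3 | (![some 0, none, some 0] : CLTStatus 3 2) i = some 0} := by
      simp
    have := h h2
    simp at this
end
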